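/- arXiv:2504.11849 — 2 statements merged into one kernel-verified Lean document; each statement's English description precedes it below -/
import Mathlib

section
/- Let K be a compact Hausdorff space and X a real Banach space. If f ∈ C(K, X) satisfies ||f(k)|| = 1 and f(k) is a right symmetric point of X for every k ∈ K, then f is a right symmetric point of C(K, X). -/
/-!
If `g ⊥_B f` in `C(K, X)`, compactness of `K` yields points `k₁`, `k₂` with
`f k₁ ∈ (g k₁)⁺` and `f k₂ ∈ (g k₂)⁻`. At a right symmetric point `u`, `u ∈ x⁺` implies
`x ∈ u⁺`: a point `w = x + t₀ • u` nearest to `x` on the line `x + ℝ u` satisfies `w ⊥_B u`,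
hence `u ⊥_B w`; `u ∈ x⁺` lets one take `t₀ ≤ 0`, and then `u + μ • x` is a multiple
`1 - μ t₀ ≥ 1` of some `u + λ • w`. As `‖f k‖ = ‖f‖` for every `k`, the inequalities
`‖f k + c • g k‖ ≥ ‖f k‖` at `k₁` (for `c ≥ 0`) and at `k₂` (for `c ≤ 0`) give `f ⊥_B g`.
-/

open scoped ENNReal

/-- Birkhoff-James orthogonality: `x ⊥_B y` iff `‖x + c • y‖ ≥ ‖x‖` for all scalars `c`. -/
def BJOrth (𝕜 : Type*) {X : Type*} [RCLike 𝕜] [NormedAddCommGroup X] [NormedSpace 𝕜 X]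
    (x y : X) : Prop := ∀ c : 𝕜, ‖x‖ ≤ ‖x + c • y‖

/-- `x` is a left symmetric point. -/
def LeftSymPt (𝕜 : Type*) {X : Type*} [RCLike 𝕜] [NormedAddCommGroup X] [NormedSpace 𝕜 X]
    (x : X) : Prop := ∀ y : X, BJOrth 𝕜 x y → BJOrth 𝕜 y x

/-- `x` is a right symmetric point. -/
def RightSymPt (𝕜 : Type*) {X : Type*} [RCLike 𝕜] [NormedAddCommGroup X] [NormedSpace 𝕜 X]
    (x : X) : Prop := ∀ y : X, BJOrth 𝕜 y x → BJOrth 𝕜 x y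

/-- `u ∈ x⁺` : `‖x + t • u‖ ≥ ‖x‖` for all `t ≥ 0`. -/
def InPlus {X : Type*} [NormedAddCommGroup X] [NormedSpace ℝ X] (x u : X) : Prop :=
  ∀ t : ℝ, 0 ≤ t → ‖x‖ ≤ ‖x + t • u‖

/-- `u ∈ x⁻` : `‖x + t • u‖ ≥ ‖x‖` for all `t ≤ 0`. -/
def InMinus {X : Type*} [NormedAddCommGroup X] [NormedSpace ℝ X] (x u : X) : Prop :=
  ∀ t : ℝ, t ≤ 0 → ‖x‖ ≤ ‖x + t • u‖

section NormedSpace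

variable {X : Type*} [NormedAddCommGroup X] [NormedSpace ℝ X]

theorem convexOn_norm_add_smul (a b : X) : ConvexOn ℝ Set.univ fun t : ℝ => ‖a + t • b‖ :=
  (convexOn_univ_norm.translate_right a).comp_linearMap (LinearMap.toSpanSingleton ℝ X b)

theorem norm_add_smul_le_norm_add_smul {a b : X} {s t : ℝ} (h : ‖a‖ ≤ ‖a + s • b‖)
    (hs : 0 < s) (hst : s ≤ t) : ‖a + s • b‖ ≤ ‖a + t • b‖ :=
  (convexOn_norm_add_smul a b).le_right_of_left_le'' trivial trivial hs hst (by simpa using h)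

theorem exists_forall_norm_add_smul_le (x u : X) :
    ∃ t₀ : ℝ, ∀ s : ℝ, ‖x + t₀ • u‖ ≤ ‖x + s • u‖ := by
  rcases eq_or_ne u 0 with rfl | hu
  · exact ⟨0, fun s => by simp⟩
  refine (continuous_const.add (continuous_id.smul continuous_const)).norm
    |>.exists_forall_le_of_isBounded 0 ?_
  refine (Metric.isBounded_iff_subset_closedBall 0).2 ⟨2 * ‖x‖ / ‖u‖, fun t ht => ?_⟩
  replace ht : ‖x + t • u‖ ≤ ‖x‖ := by simpa using ht
  rw [mem_closedBall_zero_iff, le_div_iff₀ (norm_pos_iff.2 hu), ← norm_smul]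
  calc ‖t • u‖ = ‖(x + t • u) - x‖ := by rw [add_sub_cancel_left]
    _ ≤ ‖x + t • u‖ + ‖x‖ := norm_sub_le _ _
    _ ≤ 2 * ‖x‖ := by linarith

theorem inMinus_iff_inPlus_neg_right {x u : X} : InMinus x u ↔ InPlus x (-u) := by
  refine ⟨fun h t ht => ?_, fun h t ht => ?_⟩
  · simpa using h (-t) (by linarith)
  · simpa using h (-t) (by linarith)

theorem inMinus_iff_inPlus_neg_left {x u : X} : InMinus x u ↔ InPlus (-x) u := by
  refine ⟨fun h t ht => ?_, fun h t ht => ?_⟩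
  · rw [norm_neg, show -x + t • u = -(x + (-t) • u) by module, norm_neg (_ + _)]
    exact h (-t) (by linarith)
  · rw [← norm_neg x, show x + t • u = -(-x + (-t) • u) by module, norm_neg (_ + _)]
    exact h (-t) (by linarith)

theorem RightSymPt.inPlus_symm {x u : X} (hu : RightSymPt ℝ u) (h : InPlus x u) :
    InPlus u x := by
  obtain ⟨t₀, hmin⟩ := exists_forall_norm_add_smul_le x u
  obtain ⟨t₁, ht₁, hmin₁⟩ : ∃ t₁ ≤ (0 : ℝ), ∀ s : ℝ, ‖x + t₁ • u‖ ≤ ‖x + s • u‖ := by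
    rcases le_total t₀ 0 with ht₀ | ht₀
    · exact ⟨t₀, ht₀, hmin⟩
    · exact ⟨0, le_rfl, fun s => by simpa using (h t₀ ht₀).trans (hmin s)⟩
  have horth : BJOrth ℝ u (x + t₁ • u) :=
    hu _ fun c => by simpa [add_assoc, ← add_smul] using hmin₁ (t₁ + c)
  intro μ hμ
  have hα : 1 ≤ 1 - μ * t₁ := by nlinarith
  calc ‖u‖ ≤ (1 - μ * t₁) * ‖u‖ := le_mul_of_one_le_left (norm_nonneg _) hα
    _ ≤ (1 - μ * t₁) * ‖u + (μ / (1 - μ * t₁)) • (x + t₁ • u)‖ := by gcongr; exact horth _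
    _ = ‖u + μ • x‖ := by
      rw [← norm_smul_of_nonneg (by linarith)]
      congr 1
      rw [smul_add, smul_smul, mul_div_cancel₀ _ (by linarith)]
      module

theorem RightSymPt.inMinus_symm {x u : X} (hu : RightSymPt ℝ u) (h : InMinus x u) :
    InMinus u x :=
  inMinus_iff_inPlus_neg_right.2 (hu.inPlus_symm (inMinus_iff_inPlus_neg_left.1 h))

end NormedSpace

namespace ContinuousMap

variable {K X : Type*} [TopologicalSpace K] [CompactSpace K]

theorem exists_norm_le_norm_apply [Nonempty K] [SeminormedAddCommGroup X] (h : C(K, X)) :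
    ∃ k : K, ‖h‖ ≤ ‖h k‖ := by
  obtain ⟨k, -, hk⟩ :=
    isCompact_univ.exists_isMaxOn Set.univ_nonempty h.continuous.norm.continuousOn
  exact ⟨k, (h.norm_le_of_nonempty).2 fun k' => hk (Set.mem_univ k')⟩

variable [NormedAddCommGroup X] [NormedSpace ℝ X]

theorem norm_le_norm_add_smul_of_apply {f g : C(K, X)} {k : K} {t : ℝ} (hk : ‖f‖ ≤ ‖f k‖)
    (h : ‖f k‖ ≤ ‖f k + t • g k‖) : ‖f‖ ≤ ‖f + t • g‖ :=
  calc ‖f‖ ≤ ‖f k + t • g k‖ := hk.trans h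
    _ ≤ ‖f + t • g‖ := (f + t • g).norm_coe_le_norm k

/-- The points where `‖g k + t • f k‖` reaches `‖g‖` form closed sets shrinking as `t ↓ 0`
(by convexity in `t`); a point common to all of them is the required `k`. -/
theorem exists_inPlus_apply [Nonempty K] {f g : C(K, X)} (h : InPlus g f) :
    ∃ k : K, InPlus (g k) (f k) := by
  let C : Set.Ioi (0 : ℝ) → Set K := fun t => {k | ‖g‖ ≤ ‖g k + (t : ℝ) • f k‖}
  have hclosed : ∀ t, IsClosed (C t) := fun t => isClosed_le continuous_const (by fun_prop)
  have hmono : Monotone C := fun s t hst k hk =>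
    hk.trans (norm_add_smul_le_norm_add_smul ((g.norm_coe_le_norm k).trans hk) s.2 hst)
  have hne : ∀ t, (C t).Nonempty := fun t => by
    obtain ⟨k, hk⟩ := exists_norm_le_norm_apply (g + (t : ℝ) • f)
    exact ⟨k, (h t (le_of_lt t.2)).trans (by simpa using hk)⟩
  obtain ⟨k, hk⟩ := IsCompact.nonempty_iInter_of_directed_nonempty_isCompact_isClosed C
    hmono.directed_ge hne (fun t => (hclosed t).isCompact) hclosed
  refine ⟨k, fun t ht => ?_⟩
  rcases ht.eq_or_lt with rfl | ht
  · simp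
  exact (g.norm_coe_le_norm k).trans (Set.mem_iInter.1 hk ⟨t, ht⟩)

theorem exists_inMinus_apply [Nonempty K] {f g : C(K, X)} (h : InMinus g f) :
    ∃ k : K, InMinus (g k) (f k) := by
  obtain ⟨k, hk⟩ := exists_inPlus_apply (inMinus_iff_inPlus_neg_right.1 h)
  exact ⟨k, inMinus_iff_inPlus_neg_right.2 hk⟩

end ContinuousMap

theorem stmt8_general (K X : Type*) [TopologicalSpace K] [CompactSpace K]
    [NormedAddCommGroup X] [NormedSpace ℝ X]
    (f : C(K, X)) (h1 : ∀ k : K, ‖f k‖ = 1) (h2 : ∀ k : K, RightSymPt ℝ (f k)) :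
    RightSymPt ℝ f := by
  intro g hgf c
  rcases isEmpty_or_nonempty K with _ | _
  · simp [Subsingleton.elim f 0]
  have hnorm : ∀ k, ‖f‖ ≤ ‖f k‖ := fun k =>
    (h1 k).symm ▸ (f.norm_le zero_le_one).2 fun k' => (h1 k').le
  obtain ⟨k₁, hk₁⟩ := ContinuousMap.exists_inPlus_apply (f := f) (g := g) fun t _ => hgf t
  obtain ⟨k₂, hk₂⟩ := ContinuousMap.exists_inMinus_apply (f := f) (g := g) fun t _ => hgf t
  rcases le_total 0 c with hc | hc
  · exact ContinuousMap.norm_le_norm_add_smul_of_apply (hnorm k₁) ((h2 k₁).inPlus_symm hk₁ c hc)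
  · exact ContinuousMap.norm_le_norm_add_smul_of_apply (hnorm k₂) ((h2 k₂).inMinus_symm hk₂ c hc)

/-- Sufficiency for right symmetry in C(K, X). -/
theorem stmt8 (K X : Type*) [TopologicalSpace K] [CompactSpace K] [T2Space K]
    [NormedAddCommGroup X] [NormedSpace ℝ X] [CompleteSpace X]
    (f : C(K, X)) (h1 : ∀ k : K, ‖f k‖ = 1) (h2 : ∀ k : K, RightSymPt ℝ (f k)) :
    RightSymPt ℝ f :=
  stmt8_general K X f h1 h2
end

section
/- Let X be a Banach space and n ≥ 1. An element (x₁, …, xₙ) in the ℓ∞-direct sum X^n (with norm max_i ||x_i||) is both left symmetric and right symmetric if and only if it is zero, provided n > 1. -/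
open scoped ENNReal

/-!
Let `j` be a coordinate with `‖x j‖ = ‖x‖`. For `i ≠ j`, `x ⊥ eᵢ(xᵢ)` since coordinate `j` of
`x + c eᵢ(xᵢ)` is untouched, whereas `eᵢ(xᵢ) - t x` has norm `< ‖xᵢ‖` for small `t > 0` unless
`xᵢ = 0`; so left symmetry forces `x = eⱼ(v)`. For `k ≠ j`, `y = eⱼ(v) + eₖ(v)` satisfies `y ⊥ x`
(coordinate `k` of `y + c x` is `v`), but `‖x - y / 2‖ = ‖v‖ / 2`; so right symmetry forces `v = 0`.
Everything transfers from `PiLp ∞` to the sup-normed product along a linear isometry.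
-/

section Invariance

variable {𝕜 E F : Type*} [RCLike 𝕜] [NormedAddCommGroup E] [NormedSpace 𝕜 E]
  [NormedAddCommGroup F] [NormedSpace 𝕜 F]

theorem bjOrth_map_iff (e : E ≃ₗᵢ[𝕜] F) {x y : E} : BJOrth 𝕜 (e x) (e y) ↔ BJOrth 𝕜 x y := by
  simp only [BJOrth, ← map_smul, ← map_add, LinearIsometryEquiv.norm_map]

theorem leftSymPt_map_iff (e : E ≃ₗᵢ[𝕜] F) {x : E} : LeftSymPt 𝕜 (e x) ↔ LeftSymPt 𝕜 x := by
  simp only [LeftSymPt, e.surjective.forall, bjOrth_map_iff]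

theorem rightSymPt_map_iff (e : E ≃ₗᵢ[𝕜] F) {x : E} : RightSymPt 𝕜 (e x) ↔ RightSymPt 𝕜 x := by
  simp only [RightSymPt, e.surjective.forall, bjOrth_map_iff]

end Invariance

section Zero

variable (𝕜 : Type*) {E : Type*} [RCLike 𝕜] [NormedAddCommGroup E] [NormedSpace 𝕜 E]

theorem bjOrth_zero_left (y : E) : BJOrth 𝕜 0 y := fun _ => by
  simp only [norm_zero, norm_nonneg]

theorem bjOrth_zero_right (y : E) : BJOrth 𝕜 y 0 := fun _ => by
  simp only [smul_zero, add_zero, le_refl]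

theorem leftSymPt_zero : LeftSymPt 𝕜 (0 : E) := fun y _ => bjOrth_zero_right 𝕜 y

theorem rightSymPt_zero : RightSymPt 𝕜 (0 : E) := fun y _ => bjOrth_zero_left 𝕜 y

end Zero

section Pi

variable {𝕜 ι : Type*} [RCLike 𝕜] [Fintype ι] [DecidableEq ι]

theorem LeftSymPt.apply_eq_zero_of_ne {β : ι → Type*} [∀ i, NormedAddCommGroup (β i)]
    [∀ i, NormedSpace 𝕜 (β i)] {x : ∀ i, β i} (hx : LeftSymPt 𝕜 x) {i j : ι}
    (hj : ‖x‖ ≤ ‖x j‖) (hij : i ≠ j) : x i = 0 := by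
  set y : ∀ l, β l := Pi.single i (x i)
  have hxy : BJOrth 𝕜 x y := fun c =>
    calc ‖x‖ ≤ ‖x j‖ := hj
      _ = ‖(x + c • y) j‖ := by simp [y, hij.symm]
      _ ≤ ‖x + c • y‖ := norm_le_pi_norm _ j
  by_contra hxi
  have hr : 0 < ‖x i‖ := norm_pos_iff.mpr hxi
  have hM : ‖x i‖ ≤ ‖x‖ := norm_le_pi_norm x i
  have hxpos : 0 < ‖x‖ := hr.trans_le hM
  set t : ℝ := ‖x i‖ / (2 * ‖x‖)
  have ht : 0 < t := by positivity
  have htM : t * ‖x‖ = ‖x i‖ / 2 := by simp only [t]; field_simp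
  have hlt : ‖y + (-t : 𝕜) • x‖ < ‖y‖ := by
    rw [Pi.norm_single, pi_norm_lt_iff hr]
    intro l
    by_cases hl : l = i
    · subst hl
      have ht1 : t ≤ 1 := by nlinarith
      calc ‖(y + (-t : 𝕜) • x) l‖ = ‖((1 - t : ℝ) : 𝕜) • x l‖ := by
            congr 1; simp only [y, Pi.add_apply, Pi.smul_apply, Pi.single_eq_same]; push_cast; module
        _ = (1 - t) * ‖x l‖ := by rw [norm_smul, RCLike.norm_ofReal, abs_of_nonneg (by linarith)]
        _ < ‖x l‖ := by nlinarith
    · calc ‖(y + (-t : 𝕜) • x) l‖ = t * ‖x l‖ := by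
            simp [y, hl, norm_smul, abs_of_pos ht]
        _ ≤ t * ‖x‖ := by gcongr; exact norm_le_pi_norm x l
        _ < ‖x i‖ := by linarith
  exact (hx y hxy _).not_gt hlt

variable {X : Type*} [NormedAddCommGroup X] [NormedSpace 𝕜 X]

theorem norm_single_add_single_le {j k : ι} (hjk : j ≠ k) (a b : X) :
    ‖(Pi.single j a + Pi.single k b : ι → X)‖ ≤ max ‖a‖ ‖b‖ := by
  refine (pi_norm_le_iff_of_nonneg (by positivity)).2 fun l => ?_
  by_cases hlj : l = j
  · subst hlj; simp [hjk]
  · by_cases hlk : l = k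
    · subst hlk; simp [hlj]
    · simp [hlj, hlk]

theorem RightSymPt.eq_zero_of_single {j k : ι} (hjk : j ≠ k) {v : X}
    (hv : RightSymPt 𝕜 (Pi.single j v : ι → X)) : v = 0 := by
  set x : ι → X := Pi.single j v
  set y : ι → X := Pi.single j v + Pi.single k v
  have hyx : BJOrth 𝕜 y x := fun c =>
    calc ‖y‖ ≤ ‖v‖ := by simpa using norm_single_add_single_le hjk v v
      _ = ‖(y + c • x) k‖ := by simp [x, y, hjk.symm]
      _ ≤ ‖y + c • x‖ := norm_le_pi_norm _ k
  have hhalf : x + (-(1 / 2) : 𝕜) • y =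
      Pi.single j ((1 / 2 : 𝕜) • v) + Pi.single k ((-(1 / 2) : 𝕜) • v) := by
    simp only [x, y, smul_add, ← Pi.single_smul, ← add_assoc, ← Pi.single_add]
    congr 2; module
  have key : ‖v‖ ≤ 2⁻¹ * ‖v‖ :=
    calc ‖v‖ = ‖x‖ := (Pi.norm_single (G := fun _ => X) v).symm
      _ ≤ ‖x + (-(1 / 2) : 𝕜) • y‖ := hv y hyx _
      _ ≤ max ‖(1 / 2 : 𝕜) • v‖ ‖(-(1 / 2) : 𝕜) • v‖ := hhalf ▸ norm_single_add_single_le hjk _ _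
      _ = 2⁻¹ * ‖v‖ := by simp [norm_smul]
  exact norm_le_zero_iff.mp (by linarith)

theorem eq_zero_of_leftSymPt_of_rightSymPt [Nontrivial ι] {x : ι → X} (hL : LeftSymPt 𝕜 x)
    (hR : RightSymPt 𝕜 x) : x = 0 := by
  obtain ⟨j, hj⟩ := Finite.exists_max fun i => ‖x i‖
  have hmax : ‖x‖ ≤ ‖x j‖ := (pi_norm_le_iff_of_nonneg (norm_nonneg _)).2 hj
  have hsingle : x = Pi.single j (x j) := by
    ext i
    by_cases hij : i = j
    · subst hij; simp
    · simp [hij, hL.apply_eq_zero_of_ne hmax hij]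
  obtain ⟨k, hkj⟩ := exists_ne j
  rw [hsingle] at hR ⊢
  rw [hR.eq_zero_of_single hkj.symm, Pi.single_zero]

end Pi

theorem stmt13_general (𝕜 X : Type*) [RCLike 𝕜] [NormedAddCommGroup X] [NormedSpace 𝕜 X]
    (n : ℕ) (hn : 1 < n) (x : PiLp ∞ (fun _ : Fin n => X)) :
    (LeftSymPt 𝕜 x ∧ RightSymPt 𝕜 x) ↔ x = 0 := by
  refine ⟨fun ⟨hL, hR⟩ => ?_, ?_⟩
  · have : Nontrivial (Fin n) := Fin.nontrivial_iff_two_le.mpr hn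
    set e := PiLp.equivₗᵢ (𝕜 := 𝕜) (β := fun _ : Fin n => X)
    exact e.map_eq_zero_iff.mp <|
      eq_zero_of_leftSymPt_of_rightSymPt ((leftSymPt_map_iff e).2 hL) ((rightSymPt_map_iff e).2 hR)
  · rintro rfl
    exact ⟨leftSymPt_zero 𝕜, rightSymPt_zero 𝕜⟩

/-- For n > 1, the only symmetric point of the ℓ∞-sum Xⁿ is zero. -/
theorem stmt13 (𝕜 X : Type*) [RCLike 𝕜] [NormedAddCommGroup X] [NormedSpace 𝕜 X]
    [CompleteSpace X] (n : ℕ) (hn : 1 < n) (x : PiLp ∞ (fun _ : Fin n => X)) :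
    (LeftSymPt 𝕜 x ∧ RightSymPt 𝕜 x) ↔ x = 0 :=
  stmt13_general 𝕜 X n hn x
end
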